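/- In the split fireball calculus, a program p is normal if and only if p = (f, E) for some fireball f and environment E (harmony for the split calculus). -/
import Mathlib


/-! Syntax of the fireball calculus -/

inductive Term : Type
  | var : ℕ → Term
  | lam : ℕ → Term → Term
  | app : Term → Term → Term
deriving DecidableEq

def isValue : Term → Prop
  | .var _ => True
  | .lam _ _ => True
  | .app _ _ => False

mutual
  inductive Fireball : Term → Prop
    | var (x : ℕ) : Fireball (.var x)
    | lam (x : ℕ) (t : Term) : Fireball (.lam x t)
    | inert {t : Term} : Inert t → Fireball t
  inductive Inert : Term → Prop
    | head (x : ℕ) {f : Term} : Fireball f → Inert (.app (.var x) f)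
    | app {i f : Term} : Inert i → Fireball f → Inert (.app i f)
end

def subst (x : ℕ) (s : Term) : Term → Term
  | .var y => if y = x then s else .var y
  | .lam y t => if y = x then .lam y t else .lam y (subst x s t)
  | .app t u => .app (subst x s t) (subst x s u)

def fv : Term → Finset ℕ
  | .var x => {x}
  | .lam x t => fv t \ {x}
  | .app t u => fv t ∪ fv u

/-! Call-by-value and call-by-fireball reduction (right-to-left evaluation) -/

inductive StepV : Term → Term → Prop
  | beta {x : ℕ} {t v : Term} : isValue v → StepV (.app (.lam x t) v) (subst x v t)
  | appR {t u u' : Term} : StepV u u' → StepV (.app t u) (.app t u')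
  | appL {t t' f : Term} : Fireball f → StepV t t' → StepV (.app t f) (.app t' f)

inductive StepF : Term → Term → Prop
  | betav {x : ℕ} {t v : Term} : isValue v → StepF (.app (.lam x t) v) (subst x v t)
  | betai {x : ℕ} {t i : Term} : Inert i → StepF (.app (.lam x t) i) (subst x i t)
  | appR {t u u' : Term} : StepF u u' → StepF (.app t u) (.app t u')
  | appL {t t' f : Term} : Fireball f → StepF t t' → StepF (.app t f) (.app t' f)

/-! The split fireball calculus -/

abbrev Env := List (ℕ × Term)
abbrev Program := Term × Env

inductive Ctx : Type
  | hole : Ctx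
  | appR : Term → Ctx → Ctx
  | appL : Ctx → Term → Ctx

def Ctx.ok : Ctx → Prop
  | .hole => True
  | .appR _ C => C.ok
  | .appL C f => C.ok ∧ Fireball f

def Ctx.fill : Ctx → Term → Term
  | .hole, t => t
  | .appR u C, t => .app u (C.fill t)
  | .appL C f, t => .app (C.fill t) f

inductive PStep : Program → Program → Prop
  | betav {C : Ctx} {x : ℕ} {t v : Term} {E : Env} : C.ok → isValue v →
      PStep (C.fill (.app (.lam x t) v), E) (C.fill (subst x v t), E)
  | betai {C : Ctx} {x : ℕ} {t i : Term} {E : Env} : C.ok → Inert i →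
      PStep (C.fill (.app (.lam x t) i), E) (C.fill t, (x, i) :: E)

def unfold : Program → Term
  | (t, []) => t
  | (t, (x, i) :: E) => unfold (subst x i t, E)
termination_by p => p.2.length
decreasing_by simp

inductive PSteps : ℕ → Program → Program → Prop
  | refl (p : Program) : PSteps 0 p p
  | step {p q r : Program} {k : ℕ} : PStep p q → PSteps k q r → PSteps (k + 1) p r

/-! Sizes of terms and programs -/

def sizeT : Term → ℕ
  | .var _ => 0
  | .lam _ _ => 0
  | .app t u => sizeT t + sizeT u + 1

def sizeP : Program → ℕ
  | (t, E) => sizeT t + (E.map (fun xi => sizeT xi.2)).sum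

/-! Multi types (non-idempotent intersection types) -/

mutual
  inductive LTy : Type
    | arr : MTy → MTy → LTy
  inductive MTy : Type
    | nil : MTy
    | cons : LTy → MTy → MTy
end

def MTy.append : MTy → MTy → MTy
  | .nil, N => N
  | .cons L M, N => .cons L (MTy.append M N)

theorem MTy.append_nil : ∀ M : MTy, MTy.append M .nil = M
  | .nil => rfl
  | .cons L M => congrArg (MTy.cons L) (MTy.append_nil M)

instance : AddZeroClass MTy where
  zero := .nil
  add := MTy.append
  zero_add _ := rfl
  add_zero := MTy.append_nil

mutual
  def LTy.size : LTy → ℕ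
    | .arr M N => 1 + M.size + N.size
  def MTy.size : MTy → ℕ
    | .nil => 0
    | .cons L M => L.size + M.size
end

/-- Type contexts: finitely supported maps from variables to multi types. -/
abbrev Ctxt := ℕ →₀ MTy

def sizeCtx (Γ : Ctxt) : ℕ := Γ.sum fun _ M => M.size

/-! The multi type system for the split fireball calculus.
    The natural-number index of a judgement is the number of `@`-rules
    of the derivation, i.e. its size. -/

inductive TyT : Ctxt → Term → MTy → ℕ → Prop
  | ax (x : ℕ) (M : MTy) : TyT (Finsupp.single x M) (.var x) M 0
  | app {Γ Δ : Ctxt} {t u : Term} {M N : MTy} {n m : ℕ} :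
      TyT Γ t (.cons (.arr M N) .nil) n → TyT Δ u M m →
      TyT (Γ + Δ) (.app t u) N (n + m + 1)
  | lam_nil (x : ℕ) (t : Term) : TyT 0 (.lam x t) .nil 0
  | lam_one {Γ : Ctxt} {t : Term} {N : MTy} {n : ℕ} (x : ℕ) :
      TyT Γ t N n →
      TyT (Γ.update x 0) (.lam x t) (.cons (.arr (Γ x) N) .nil) n
  | lam_add {Γ Δ : Ctxt} {x : ℕ} {t : Term} {M N : MTy} {n m : ℕ} :
      TyT Γ (.lam x t) M n → TyT Δ (.lam x t) N m →
      TyT (Γ + Δ) (.lam x t) (M + N) (n + m)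

inductive TyP : Ctxt → Program → MTy → ℕ → Prop
  | nil {Γ : Ctxt} {t : Term} {M : MTy} {n : ℕ} :
      TyT Γ t M n → TyP Γ (t, []) M n
  | snoc {Γ Δ : Ctxt} {t : Term} {E : Env} {x : ℕ} {i : Term} {N : MTy} {n m : ℕ} :
      TyP Γ (t, E) N n → TyT Δ i (Γ x) m → Inert i →
      TyP (Γ.update x 0 + Δ) (t, E ++ [(x, i)]) N (n + m)

/-! Expressions: terms or programs -/

inductive Expr : Type
  | tm : Term → Expr
  | pr : Program → Expr

def TyE (Γ : Ctxt) (e : Expr) (M : MTy) (n : ℕ) : Prop :=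
  match e with
  | .tm t => TyT Γ t M n
  | .pr p => TyP Γ p M n

def fvE : Expr → Finset ℕ
  | .tm t => fv t
  | .pr p => fv (unfold p)

def sizeE : Expr → ℕ
  | .tm t => sizeT t
  | .pr p => sizeP p

def normE : Expr → Prop
  | .tm t => ∀ u, ¬ StepF t u
  | .pr p => ∀ q, ¬ PStep p q

/-! Inert multi types and inert type contexts -/

inductive InertM : MTy → Prop
  | nil : InertM .nil
  | cons {N M : MTy} : InertM N → InertM M → InertM (.cons (.arr .nil N) M)

def InertCtx (Γ : Ctxt) : Prop := ∀ x, InertM (Γ x)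

theorem fill_is_app (C : Ctx) (a b : Term) :
    ∃ c d, Ctx.fill C (.app a b) = .app c d := by
  cases C <;> exact ⟨_, _, rfl⟩

theorem fireball_no_fill (x : ℕ) (s u : Term) :
    ∀ C : Ctx, Ctx.ok C → ¬ Fireball (Ctx.fill C (.app (.lam x s) u)) := by
  intro C
  induction C with
  | hole =>
    intro _ h
    cases h with
    | inert hi =>
      cases hi with
      | app hi _ => cases hi
  | appR t C ih =>
    intro hok h
    cases h with
    | inert hi =>
      cases hi with
      | head _ hf => exact ih hok hf
      | app _ hf => exact ih hok hf
  | appL C g ih =>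
    intro hok h
    obtain ⟨c, d, hcd⟩ := fill_is_app C (.lam x s) u
    cases h with
    | inert hi =>
      rw [show Ctx.fill (Ctx.appL C g) (.app (.lam x s) u)
            = .app (Ctx.fill C (.app (.lam x s) u)) g from rfl, hcd] at hi
      cases hi with
      | app hi _ => exact ih hok.1 (by rw [hcd]; exact .inert hi)

theorem decomp (t : Term) : Fireball t ∨
    ∃ C x s f, Ctx.ok C ∧ Fireball f ∧ t = Ctx.fill C (.app (.lam x s) f) := by
  induction t with
  | var x => exact .inl (.var x)
  | lam x t => exact .inl (.lam x t)
  | app a b iha ihb =>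
    rcases ihb with fb | ⟨C, x, s, f, hok, hf, rfl⟩
    · rcases iha with fa | ⟨C, x, s, f, hok, hf, rfl⟩
      · cases fa with
        | var y => exact .inl (.inert (.head y fb))
        | lam y s => exact .inr ⟨.hole, y, s, b, trivial, fb, rfl⟩
        | inert hi => exact .inl (.inert (.app hi fb))
      · exact .inr ⟨.appL C b, x, s, f, ⟨hok, fb⟩, hf, rfl⟩
    · exact .inr ⟨.appR a C, x, s, f, hok, hf, rfl⟩

theorem split_harmony (p : Program) :
    (∀ q, ¬ PStep p q) ↔ ∃ (f : Term) (E : Env), Fireball f ∧ p = (f, E) := by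
  obtain ⟨t, E⟩ := p
  constructor
  · intro h
    rcases decomp t with ft | ⟨C, x, s, f, hok, hf, rfl⟩
    · exact ⟨t, E, ft, rfl⟩
    · exfalso
      cases hf with
      | var y => exact h _ (PStep.betav hok trivial)
      | lam y u => exact h _ (PStep.betav hok trivial)
      | inert hi => exact h _ (PStep.betai hok hi)
  · rintro ⟨f, E', hf, heq⟩ q hq
    injection heq with h1 h2
    subst h1; subst h2
    cases hq with
    | betav hok hv => exact fireball_no_fill _ _ _ _ hok hf
    | betai hok hi => exact fireball_no_fill _ _ _ _ hok hf
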